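/- arXiv:2108.03837 — 2 statements merged into one kernel-verified Lean document; each statement's English description precedes it below -/
import Mathlib

section
/- For any sequences of predictions a^t ∈ [0,1] and labels b^t ∈ [0,1] over t ∈ [T] and any bucketing parameter n ≥ 1, the Brier score is bounded by the bucketed Brier score plus 1/n: B^a ≤ B^a_n + 1/n, where B^a_n := K^a_n + R^a_n. -/
open scoped BigOperators Classical

noncomputable section

/-- Membership in the `i`-th bucket of the `n`-bucketing of `[0,1]`:
`B^i_n = [i/n, (i+1)/n)` for `i < n−1`, and `B^{n-1}_n = [1−1/n, 1]`
(buckets indexed from `0`). -/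
def inBucket (n : ℕ) (i : Fin n) (z : ℝ) : Prop :=
  ((i : ℝ) / n ≤ z ∧ z < ((i : ℝ) + 1) / n) ∨ ((i : ℕ) + 1 = n ∧ z = 1)

/-- The average of `v` over a finite set `S` of rounds (zero if `S` is empty). -/
noncomputable def subseqAvg {T : ℕ} (S : Finset (Fin T)) (v : Fin T → ℝ) : ℝ :=
  (∑ t ∈ S, v t) / S.card

/-! Inside one bucket `S` the predictions lie in an interval of width `h = 1/n`. The bias–variance
identity for `a - b` gives `∑_S (a - b)² = |S| (ā - b̄)² + ∑_S ((a - ā) - (b - b̄))²`, and the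
weighted AM–GM bound `(u - v)² ≤ (1 + 1/h) u² + (1 + h) v²` splits the last sum into the refinement
term plus `(1 + 1/h) ∑_S (a - ā)² + h ∑_S (b - b̄)²`. A sum of squared deviations from the mean is at
most `|S| (width / 2)²`, so this excess is at most `|S| (h² + 2h) / 4 ≤ |S| h`. Summing over the
buckets, which partition the rounds, costs `T / n` in total. -/

open Finset

lemma sub_sq_le_of_pos {h : ℝ} (hh : 0 < h) (u v : ℝ) :
    (u - v) ^ 2 ≤ (1 + h⁻¹) * u ^ 2 + (1 + h) * v ^ 2 := by
  have key : (1 + h⁻¹) * u ^ 2 + (1 + h) * v ^ 2 - (u - v) ^ 2 = (u + h * v) ^ 2 / h := by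
    field_simp
    ring
  have : 0 ≤ (u + h * v) ^ 2 / h := by positivity
  linarith

namespace Finset

variable {ι : Type*} (s : Finset ι)

lemma sum_sub_expect_eq_zero (f : ι → ℝ) : ∑ i ∈ s, (f i - 𝔼 j ∈ s, f j) = 0 := by
  rw [sum_sub_distrib, sum_const, nsmul_eq_mul, card_mul_expect, sub_self]

lemma sum_sq_sub_eq_sum_sq_sub_expect_add (f : ι → ℝ) (x : ℝ) :
    ∑ i ∈ s, (f i - x) ^ 2 =
      ∑ i ∈ s, (f i - 𝔼 j ∈ s, f j) ^ 2 + #s * (𝔼 j ∈ s, f j - x) ^ 2 := by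
  set μ := 𝔼 j ∈ s, f j
  have hsplit : ∀ i ∈ s, (f i - x) ^ 2 =
      (f i - μ) ^ 2 + (f i - μ) * (2 * (μ - x)) + (μ - x) ^ 2 := fun i _ => by ring
  rw [sum_congr rfl hsplit, sum_add_distrib, sum_add_distrib, ← sum_mul,
    sum_sub_expect_eq_zero, sum_const, nsmul_eq_mul, zero_mul, add_zero]

lemma sum_sq_sub_expect_le (f : ι → ℝ) (x : ℝ) :
    ∑ i ∈ s, (f i - 𝔼 j ∈ s, f j) ^ 2 ≤ ∑ i ∈ s, (f i - x) ^ 2 := by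
  rw [sum_sq_sub_eq_sum_sq_sub_expect_add s f x]
  exact le_add_of_nonneg_right (by positivity)

lemma sum_sq_sub_expect_le_of_mem_Icc {f : ι → ℝ} {m h : ℝ}
    (hf : ∀ i ∈ s, f i ∈ Set.Icc m (m + h)) :
    ∑ i ∈ s, (f i - 𝔼 j ∈ s, f j) ^ 2 ≤ #s * (h / 2) ^ 2 := by
  calc ∑ i ∈ s, (f i - 𝔼 j ∈ s, f j) ^ 2
      ≤ ∑ i ∈ s, (f i - (m + h / 2)) ^ 2 := sum_sq_sub_expect_le s f _
    _ ≤ ∑ _i ∈ s, (h / 2) ^ 2 := by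
        refine sum_le_sum fun i hi => ?_
        obtain ⟨hm, hM⟩ := hf i hi
        exact sq_le_sq' (by linarith) (by linarith)
    _ = #s * (h / 2) ^ 2 := by rw [sum_const, nsmul_eq_mul]

lemma sum_sq_sub_le_calibration_add_refinement {a b : ι → ℝ} {m h : ℝ}
    (hh₀ : 0 < h) (hh₁ : h ≤ 1) (ha : ∀ i ∈ s, a i ∈ Set.Icc m (m + h))
    (hb : ∀ i ∈ s, b i ∈ Set.Icc 0 1) :
    ∑ i ∈ s, (a i - b i) ^ 2 ≤
      #s * (𝔼 i ∈ s, a i - 𝔼 i ∈ s, b i) ^ 2 + ∑ i ∈ s, (b i - 𝔼 j ∈ s, b j) ^ 2 + #s * h := by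
  set A := 𝔼 i ∈ s, a i
  set B := 𝔼 i ∈ s, b i
  set X := ∑ i ∈ s, (a i - A) ^ 2
  set Y := ∑ i ∈ s, (b i - B) ^ 2
  have hX : X ≤ #s * (h / 2) ^ 2 := s.sum_sq_sub_expect_le_of_mem_Icc ha
  have hY : Y ≤ #s * (1 / 2) ^ 2 :=
    s.sum_sq_sub_expect_le_of_mem_Icc (m := 0) (by simpa only [zero_add] using hb)
  have hdecomp : ∑ i ∈ s, (a i - b i) ^ 2 =
      ∑ i ∈ s, ((a i - A) - (b i - B)) ^ 2 + #s * (A - B) ^ 2 := by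
    have := s.sum_sq_sub_eq_sum_sq_sub_expect_add (fun i => a i - b i) 0
    simp only [sub_zero, expect_sub_distrib] at this
    rw [this]
    congr 2 with i
    ring
  have hcross : ∑ i ∈ s, ((a i - A) - (b i - B)) ^ 2 ≤ (1 + h⁻¹) * X + (1 + h) * Y := by
    rw [mul_sum, mul_sum, ← sum_add_distrib]
    exact sum_le_sum fun i _ => sub_sq_le_of_pos hh₀ _ _
  have hslack : (1 + h⁻¹) * (#s * (h / 2) ^ 2) + h * (#s * (1 / 2) ^ 2) ≤ #s * h := by
    have hcard : (0 : ℝ) ≤ #s := by positivity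
    field_simp
    nlinarith
  calc ∑ i ∈ s, (a i - b i) ^ 2
      ≤ (1 + h⁻¹) * X + (1 + h) * Y + #s * (A - B) ^ 2 := by rw [hdecomp]; gcongr
    _ = #s * (A - B) ^ 2 + Y + ((1 + h⁻¹) * X + h * Y) := by ring
    _ ≤ #s * (A - B) ^ 2 + Y + #s * h := by
        gcongr
        exact le_trans (by gcongr) hslack

end Finset

def bucketIndex (n : ℕ) [NeZero n] (z : ℝ) : Fin n :=
  ⟨min ⌊n * z⌋₊ (n - 1), by have := NeZero.pos n; omega⟩

lemma inBucket_iff_eq_bucketIndex {n : ℕ} [NeZero n] (i : Fin n) {z : ℝ}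
    (hz : z ∈ Set.Icc (0 : ℝ) 1) : inBucket n i z ↔ i = bucketIndex n z := by
  obtain ⟨hz₀, hz₁⟩ := hz
  have hn : (0 : ℝ) < n := by exact_mod_cast NeZero.pos n
  have hi : (i : ℕ) + 1 ≤ n := i.2
  rw [Fin.ext_iff]
  change inBucket n i z ↔ (i : ℕ) = min ⌊n * z⌋₊ (n - 1)
  rcases hz₁.eq_or_lt with rfl | hz₁
  · have hlast : ((i : ℝ) + 1) / n ≤ 1 := by rw [div_le_one hn]; exact_mod_cast hi
    simp only [inBucket, mul_one, Nat.floor_natCast, and_true, min_eq_right (Nat.sub_le n 1)]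
    constructor
    · rintro (⟨-, h⟩ | h)
      · exact absurd hlast (not_le.2 h)
      · omega
    · intro h; right; omega
  · have hfloor : ⌊n * z⌋₊ < n :=
      (Nat.floor_lt (by positivity)).2 (by nlinarith)
    rw [min_eq_left (by omega), eq_comm, Nat.floor_eq_iff (by positivity), inBucket,
      div_le_iff₀ hn, lt_div_iff₀ hn]
    simp only [hz₁.ne, and_false, or_false]
    constructor <;> rintro ⟨h₁, h₂⟩ <;> constructor <;> linarith

lemma inBucket.mem_Icc {n : ℕ} {i : Fin n} {z : ℝ} (h : inBucket n i z) :
    z ∈ Set.Icc ((i : ℝ) / n) ((i : ℝ) / n + 1 / n) := by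
  rw [← add_div]
  rcases h with ⟨h₁, h₂⟩ | ⟨hi, rfl⟩
  · exact ⟨h₁, h₂.le⟩
  · have hn : (n : ℝ) = (i : ℝ) + 1 := by exact_mod_cast hi.symm
    rw [hn, div_self (by positivity)]
    exact ⟨div_le_one_of_le₀ (by linarith) (by positivity), le_rfl⟩

lemma sum_eq_sum_sum_inBucket {ι : Type*} [Fintype ι] {n : ℕ} [NeZero n] {a : ι → ℝ}
    (ha : ∀ t, a t ∈ Set.Icc (0 : ℝ) 1) (F : ι → ℝ) :
    ∑ t, F t = ∑ i : Fin n, ∑ t ∈ Finset.univ.filter fun t => inBucket n i (a t), F t := by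
  rw [← sum_fiberwise univ (fun t => bucketIndex n (a t)) F]
  refine sum_congr rfl fun i _ => sum_congr (filter_congr fun t _ => ?_) fun _ _ => rfl
  rw [inBucket_iff_eq_bucketIndex i (ha t), eq_comm]

/-- **Lemma C.2.** For predictions `a^t ∈ [0,1]` and labels `b^t ∈ [0,1]`
and any bucketing parameter `n ≥ 1`, the Brier score is bounded by the bucketed Brier
score plus `1/n`:  `B^a ≤ K^a_n + R^a_n + 1/n`. -/
theorem brier_le_bucketed_brier
    (T n : ℕ) (hT : 1 ≤ T) (hn : 1 ≤ n)
    (a b : Fin T → ℝ)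
    (ha : ∀ t, a t ∈ Set.Icc (0 : ℝ) 1) (hb : ∀ t, b t ∈ Set.Icc (0 : ℝ) 1) :
    -- Brier score B^a
    (1 / (T : ℝ)) * ∑ t, (a t - b t) ^ 2 ≤
      -- bucketed calibration score K^a_n
      ((1 / (T : ℝ)) * ∑ i : Fin n,
        (((Finset.univ.filter fun t => inBucket n i (a t)).card : ℝ) *
          (subseqAvg (Finset.univ.filter fun t => inBucket n i (a t)) a -
            subseqAvg (Finset.univ.filter fun t => inBucket n i (a t)) b) ^ 2)) +
      -- bucketed refinement score R^a_n
      ((1 / (T : ℝ)) * ∑ i : Fin n,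
        ∑ t ∈ Finset.univ.filter fun t => inBucket n i (a t),
          (b t - subseqAvg (Finset.univ.filter fun t => inBucket n i (a t)) b) ^ 2) +
      1 / n := by
  have : NeZero n := ⟨by omega⟩
  set S : Fin n → Finset (Fin T) := fun i => Finset.univ.filter fun t => inBucket n i (a t)
  have hcard : ∑ i, (#(S i) : ℝ) = T := by
    simpa using (sum_eq_sum_sum_inBucket (n := n) ha fun _ => (1 : ℝ)).symm
  have hbucket (i : Fin n) : ∑ t ∈ S i, (a t - b t) ^ 2 ≤
      #(S i) * (subseqAvg (S i) a - subseqAvg (S i) b) ^ 2 +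
        ∑ t ∈ S i, (b t - subseqAvg (S i) b) ^ 2 + #(S i) * (1 / n) := by
    simp only [subseqAvg, ← expect_eq_sum_div_card]
    have hwidth : 1 / (n : ℝ) ≤ 1 := div_le_one_of_le₀ (by exact_mod_cast hn) (by positivity)
    exact (S i).sum_sq_sub_le_calibration_add_refinement (by positivity) hwidth
      (fun t ht => (mem_filter.1 ht).2.mem_Icc) fun t _ => hb t
  calc (1 / (T : ℝ)) * ∑ t, (a t - b t) ^ 2
      = 1 / T * ∑ i, ∑ t ∈ S i, (a t - b t) ^ 2 := by rw [sum_eq_sum_sum_inBucket (n := n) ha]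
    _ ≤ 1 / T * ∑ i, (#(S i) * (subseqAvg (S i) a - subseqAvg (S i) b) ^ 2 +
          ∑ t ∈ S i, (b t - subseqAvg (S i) b) ^ 2 + #(S i) * (1 / n)) := by
        gcongr with i; exact hbucket i
    _ = _ := by
        have : (T : ℝ) ≠ 0 := Nat.cast_ne_zero.2 (by omega)
        rw [sum_add_distrib, sum_add_distrib, ← sum_mul, hcard]
        field_simp
        simp only [S]
        ring

end
end

section
/- Suppose the Learner's predictions a^1, …, a^T are (α, n)-multicalibrated on the collection of groups S(f) ∪ {Θ}, where S(f) := { {θ ∈ Θ : f(θ) = d} : d ∈ D_f } is the family of level sets of the forecaster f. Then the Learner is (α, n)-calibrated on Θ, and the Learner (α·n·(|D_f| + 2) + 2/n)-calibeats f; that is, B^a ≤ R^f + α·n·(|D_f| + 2) + 2/n. -/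
/-!
Split the rounds into the cells `{t : f(θ^t) = d, a^t ∈ B^i_n}`. On a cell the predictions lie
within `1/(2n)` of the bucket midpoint `c`, so replacing them by `c` costs at most `1/n` per round
in squared error. By the bias-variance decomposition, the squared error of `c` is the variance of
`b` on the cell plus `|C| (c - m)²`, where `m` is the cell average of `b`; and `|C| |c - m|` is at
most the rounding error `|C|/(2n)` plus the calibration error of the cell, which is at most `αT`
by multicalibration on the level set of `d`. The cell variances of `b` add up to at most the
variance of `b` around the level-set averages, i.e. to `T R^f`, while the calibration errors of
the `|D_f| n` cells add up to at most `|D_f| n α T`. Hence `B^a ≤ R^f + α n |D_f| + 3/(2n)`.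
-/

open scoped BigOperators Classical

noncomputable section

open Finset

lemma sum_sum_filter_of_existsUnique {ι κ M : Type*} [AddCommMonoid M] [Fintype κ]
    (s : Finset ι) (P : κ → ι → Prop) [∀ j i, Decidable (P j i)]
    (h : ∀ i ∈ s, ∃! j, P j i) (f : ι → M) :
    ∑ j, ∑ i ∈ s with P j i, f i = ∑ i ∈ s, f i := by
  simp only [sum_filter]
  rw [sum_comm]
  refine sum_congr rfl fun i hi => ?_
  obtain ⟨j, hj, huniq⟩ := h i hi
  rw [sum_eq_single j (fun k _ hk => if_neg fun hPk => hk (huniq k hPk)) (by simp)]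
  exact if_pos hj

section Buckets

variable {n : ℕ}

theorem existsUnique_inBucket (hn : 1 ≤ n) {z : ℝ} (hz : z ∈ Set.Icc (0 : ℝ) 1) :
    ∃! i : Fin n, inBucket n i z := by
  have hn0 : (0 : ℝ) < n := by exact_mod_cast hn
  have hzn : 0 ≤ z * n := mul_nonneg hz.1 hn0.le
  rcases hz.2.eq_or_lt with rfl | hz1
  · refine ⟨⟨n - 1, by omega⟩, Or.inr ⟨by simp only; omega, rfl⟩, fun j hj => ?_⟩
    rcases hj with ⟨-, hj⟩ | ⟨hj, -⟩
    · have : (j : ℝ) + 1 ≤ n := by exact_mod_cast j.isLt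
      rw [lt_div_iff₀ hn0] at hj
      linarith
    · exact Fin.ext (by simp only; omega)
  · have hfloor : ⌊z * n⌋₊ < n := by
      rw [Nat.floor_lt hzn]
      nlinarith
    refine ⟨⟨⌊z * n⌋₊, hfloor⟩, Or.inl ?_, fun j hj => ?_⟩
    · rw [div_le_iff₀ hn0, lt_div_iff₀ hn0]
      exact ⟨Nat.floor_le hzn, Nat.lt_floor_add_one _⟩
    · rcases hj with ⟨hl, hr⟩ | ⟨-, rfl⟩
      · rw [div_le_iff₀ hn0] at hl
        rw [lt_div_iff₀ hn0] at hr
        exact Fin.ext ((Nat.floor_eq_iff hzn).2 ⟨hl, hr⟩).symm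
      · exact absurd hz1 (lt_irrefl 1)

theorem abs_sub_bucketMid_le {i : Fin n} {z : ℝ} (h : inBucket n i z) :
    |z - ((i : ℝ) + 1 / 2) / n| ≤ 1 / (2 * n) := by
  have hn0 : (0 : ℝ) < n := by exact_mod_cast i.pos
  have hlow : ((i : ℝ) + 1 / 2) / n - 1 / (2 * n) = i / n := by field_simp; ring
  have hhigh : ((i : ℝ) + 1 / 2) / n + 1 / (2 * n) = (i + 1) / n := by field_simp; ring
  rw [abs_le]
  rcases h with ⟨hl, hr⟩ | ⟨hi, rfl⟩
  · constructor <;> linarith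
  · have hi : (i : ℝ) + 1 = n := by exact_mod_cast hi
    rw [hi, div_self hn0.ne'] at hhigh
    constructor <;> linarith [show (0 : ℝ) < 1 / (2 * n) by positivity]

theorem bucketMid_mem_Icc (i : Fin n) : ((i : ℝ) + 1 / 2) / n ∈ Set.Icc (0 : ℝ) 1 := by
  have hn0 : (0 : ℝ) < n := by exact_mod_cast i.pos
  have hi : (i : ℝ) + 1 ≤ n := by exact_mod_cast i.isLt
  constructor
  · positivity
  · rw [div_le_one hn0]
    linarith

end Buckets

theorem sq_sub_le_sq_sub_add_of_abs_sub_le {a b c δ : ℝ} (ha : a ∈ Set.Icc (0 : ℝ) 1)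
    (hb : b ∈ Set.Icc (0 : ℝ) 1) (hc : c ∈ Set.Icc (0 : ℝ) 1) (hac : |a - c| ≤ δ) :
    (a - b) ^ 2 ≤ (b - c) ^ 2 + 2 * δ := by
  have hsum : |a + c - 2 * b| ≤ 2 :=
    abs_le.2 ⟨by linarith [ha.1, hb.2, hc.1], by linarith [ha.2, hb.1, hc.2]⟩
  calc (a - b) ^ 2 = (b - c) ^ 2 + (a - c) * (a + c - 2 * b) := by ring
    _ ≤ (b - c) ^ 2 + |a - c| * |a + c - 2 * b| := by
        rw [← abs_mul]; gcongr; exact le_abs_self _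
    _ ≤ (b - c) ^ 2 + 2 * δ := by
        gcongr (_ + ?_)
        linarith [mul_le_mul hac hsum (abs_nonneg _) ((abs_nonneg _).trans hac)]

section Averages

variable {ι : Type*} (s : Finset ι)

theorem exists_mem_Icc_card_mul_eq_sum {b : ι → ℝ} (hb : ∀ t ∈ s, b t ∈ Set.Icc (0 : ℝ) 1) :
    ∃ m ∈ Set.Icc (0 : ℝ) 1, (#s : ℝ) * m = ∑ t ∈ s, b t := by
  rcases s.eq_empty_or_nonempty with rfl | hs
  · exact ⟨0, by simp, by simp⟩
  have hcard : (0 : ℝ) < #s := by exact_mod_cast hs.card_pos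
  refine ⟨(∑ t ∈ s, b t) / #s, ⟨?_, ?_⟩, mul_div_cancel₀ _ hcard.ne'⟩
  · exact div_nonneg (sum_nonneg fun t ht => (hb t ht).1) hcard.le
  · rw [div_le_one hcard]
    simpa using sum_le_sum fun t ht => (hb t ht).2

theorem sum_sq_sub_eq_sum_sq_sub_add (b : ι → ℝ) {m : ℝ} (hm : (#s : ℝ) * m = ∑ t ∈ s, b t)
    (x : ℝ) : ∑ t ∈ s, (b t - x) ^ 2 = ∑ t ∈ s, (b t - m) ^ 2 + #s * (x - m) ^ 2 := by
  have hdev : ∑ t ∈ s, (b t - m) = 0 := by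
    rw [sum_sub_distrib, sum_const, nsmul_eq_mul, hm, sub_self]
  calc ∑ t ∈ s, (b t - x) ^ 2
      = ∑ t ∈ s, ((b t - m) ^ 2 + (x - m) ^ 2 - 2 * (x - m) * (b t - m)) :=
        sum_congr rfl fun _ _ => by ring
    _ = ∑ t ∈ s, (b t - m) ^ 2 + #s * (x - m) ^ 2 := by
        rw [sum_sub_distrib, sum_add_distrib, sum_const, nsmul_eq_mul, ← mul_sum, hdev]
        ring

theorem sum_sq_sub_le_of_abs_sub_le {a b : ι → ℝ} {c δ : ℝ} (hc : c ∈ Set.Icc (0 : ℝ) 1)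
    (ha : ∀ t ∈ s, a t ∈ Set.Icc (0 : ℝ) 1) (hb : ∀ t ∈ s, b t ∈ Set.Icc (0 : ℝ) 1)
    (hac : ∀ t ∈ s, |a t - c| ≤ δ) (x : ℝ) :
    ∑ t ∈ s, (a t - b t) ^ 2 ≤
      ∑ t ∈ s, (b t - x) ^ 2 + 3 * δ * #s + |∑ t ∈ s, (b t - a t)| := by
  obtain ⟨m, hm01, hm⟩ := exists_mem_Icc_card_mul_eq_sum s hb
  have hround : ∑ t ∈ s, (a t - b t) ^ 2 ≤ ∑ t ∈ s, (b t - c) ^ 2 + 2 * δ * #s := by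
    calc ∑ t ∈ s, (a t - b t) ^ 2 ≤ ∑ t ∈ s, ((b t - c) ^ 2 + 2 * δ) :=
          sum_le_sum fun t ht =>
            sq_sub_le_sq_sub_add_of_abs_sub_le (ha t ht) (hb t ht) hc (hac t ht)
      _ = ∑ t ∈ s, (b t - c) ^ 2 + 2 * δ * #s := by
          rw [sum_add_distrib, sum_const, nsmul_eq_mul]; ring
  have hbias : (#s : ℝ) * (c - m) ^ 2 ≤ δ * #s + |∑ t ∈ s, (b t - a t)| := by
    have hcm : |c - m| ≤ 1 :=
      abs_le.2 ⟨by linarith [hc.1, hm01.2], by linarith [hc.2, hm01.1]⟩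
    have hdecomp : (#s : ℝ) * (c - m) = ∑ t ∈ s, (c - a t) - ∑ t ∈ s, (b t - a t) := by
      simp only [sum_sub_distrib, sum_const, nsmul_eq_mul, mul_sub, hm]; ring
    calc (#s : ℝ) * (c - m) ^ 2 ≤ #s * |c - m| := by
          rw [← sq_abs]; gcongr; exact pow_le_of_le_one (abs_nonneg _) hcm two_ne_zero
      _ = |∑ t ∈ s, (c - a t) - ∑ t ∈ s, (b t - a t)| := by
          rw [← hdecomp, abs_mul, Nat.abs_cast]
      _ ≤ ∑ t ∈ s, |c - a t| + |∑ t ∈ s, (b t - a t)| :=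
          (abs_sub _ _).trans (add_le_add_left (abs_sum_le_sum_abs _ _) _)
      _ ≤ ∑ t ∈ s, δ + |∑ t ∈ s, (b t - a t)| := by
          gcongr with t ht; rw [abs_sub_comm]; exact hac t ht
      _ = δ * #s + |∑ t ∈ s, (b t - a t)| := by rw [sum_const, nsmul_eq_mul, mul_comm]
  have hc := sum_sq_sub_eq_sum_sq_sub_add s b hm c
  have hx := sum_sq_sub_eq_sum_sq_sub_add s b hm x
  have hx_nonneg : (0 : ℝ) ≤ #s * (x - m) ^ 2 := by positivity
  linarith

end Averages

theorem sum_sq_sub_le_add_sum_abs_bucket {ι : Type*} {n : ℕ} (hn : 1 ≤ n) (s : Finset ι)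
    {a b : ι → ℝ} (ha : ∀ t ∈ s, a t ∈ Set.Icc (0 : ℝ) 1)
    (hb : ∀ t ∈ s, b t ∈ Set.Icc (0 : ℝ) 1) (x : ℝ) :
    ∑ t ∈ s, (a t - b t) ^ 2 ≤ ∑ t ∈ s, (b t - x) ^ 2 + 3 * #s / (2 * n) +
      ∑ i : Fin n, |∑ t ∈ s with inBucket n i (a t), (b t - a t)| := by
  have hpart (G : ι → ℝ) : ∑ t ∈ s, G t = ∑ i : Fin n, ∑ t ∈ s with inBucket n i (a t), G t :=
    (sum_sum_filter_of_existsUnique s (fun i t => inBucket n i (a t))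
      (fun t ht => existsUnique_inBucket hn (ha t ht)) G).symm
  have hcard : (#s : ℝ) = ∑ i : Fin n, (#{t ∈ s | inBucket n i (a t)} : ℝ) := by
    simpa using hpart fun _ => 1
  calc ∑ t ∈ s, (a t - b t) ^ 2
      = ∑ i : Fin n, ∑ t ∈ s with inBucket n i (a t), (a t - b t) ^ 2 := hpart _
    _ ≤ ∑ i : Fin n, (∑ t ∈ s with inBucket n i (a t), (b t - x) ^ 2 +
          3 * (1 / (2 * n)) * #{t ∈ s | inBucket n i (a t)} +
          |∑ t ∈ s with inBucket n i (a t), (b t - a t)|) := by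
        gcongr with i
        exact sum_sq_sub_le_of_abs_sub_le _ (bucketMid_mem_Icc i)
          (fun t ht => ha t (mem_filter.1 ht).1) (fun t ht => hb t (mem_filter.1 ht).1)
          (fun t ht => abs_sub_bucketMid_le (mem_filter.1 ht).2) x
    _ = ∑ t ∈ s, (b t - x) ^ 2 + 3 * #s / (2 * n) +
          ∑ i : Fin n, |∑ t ∈ s with inBucket n i (a t), (b t - a t)| := by
        rw [sum_add_distrib, sum_add_distrib, ← hpart, ← mul_sum, ← hcard]
        ring

theorem sum_sq_sub_le_add_sum_abs_level_bucket {ι κ : Type*} [Fintype ι] [DecidableEq κ]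
    {n : ℕ} (hn : 1 ≤ n) (g : ι → κ) (D : Finset κ) (hg : ∀ t, g t ∈ D)
    {a b : ι → ℝ} (ha : ∀ t, a t ∈ Set.Icc (0 : ℝ) 1) (hb : ∀ t, b t ∈ Set.Icc (0 : ℝ) 1)
    (x : κ → ℝ) :
    ∑ t, (a t - b t) ^ 2 ≤ ∑ d ∈ D, ∑ t with g t = d, (b t - x d) ^ 2 +
      3 * Fintype.card ι / (2 * n) +
      ∑ d ∈ D, ∑ i : Fin n, |∑ t with g t = d ∧ inBucket n i (a t), (b t - a t)| := by
  calc ∑ t, (a t - b t) ^ 2 = ∑ d ∈ D, ∑ t with g t = d, (a t - b t) ^ 2 :=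
        (sum_fiberwise_of_maps_to (fun t _ => hg t) _).symm
    _ ≤ ∑ d ∈ D, (∑ t with g t = d, (b t - x d) ^ 2 + 3 * #{t | g t = d} / (2 * n) +
          ∑ i : Fin n, |∑ t ∈ {t | g t = d} with inBucket n i (a t), (b t - a t)|) := by
        gcongr with d
        exact sum_sq_sub_le_add_sum_abs_bucket hn _ (fun t _ => ha t) (fun t _ => hb t) _
    _ = _ := by
        rw [sum_add_distrib, sum_add_distrib, ← sum_div, ← mul_sum, ← card_univ,
          card_eq_sum_card_fiberwise fun t _ => hg t]
        simp only [filter_filter, Nat.cast_sum]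

theorem calibeating_single_forecaster_general
    (T n : ℕ) (hn : 1 ≤ n)
    (Θ : Type) (θ : Fin T → Θ)
    (a b : Fin T → ℝ)
    (ha : ∀ t, a t ∈ Set.Icc (0 : ℝ) 1) (hb : ∀ t, b t ∈ Set.Icc (0 : ℝ) 1)
    -- the forecaster `f`, with finite set of possible forecasts `D_f ⊆ [0,1]`
    (f : Θ → ℝ) (D : Finset ℝ) (hfD : ∀ x, f x ∈ D)
    (α : ℝ)
    -- `(α, n)`-multicalibration with respect to the level sets of `f` …
    (hcal_f : ∀ d ∈ D, ∀ i : Fin n,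
      (1 / (T : ℝ)) *
        |∑ t, if f (θ t) = d ∧ inBucket n i (a t) then b t - a t else 0| ≤ α)
    -- … and with respect to the whole domain `Θ`
    (hcal_all : ∀ i : Fin n,
      (1 / (T : ℝ)) * |∑ t, if inBucket n i (a t) then b t - a t else 0| ≤ α) :
    -- the Learner is `(α, n)`-calibrated on `Θ`, and she calibeats `f`:
    (∀ i : Fin n,
      (1 / (T : ℝ)) * |∑ t, if inBucket n i (a t) then b t - a t else 0| ≤ α) ∧
    (1 / (T : ℝ)) * ∑ t, (a t - b t) ^ 2 ≤
      ((1 / (T : ℝ)) * ∑ d ∈ D,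
        ∑ t ∈ Finset.univ.filter fun t => f (θ t) = d,
          (b t - subseqAvg (Finset.univ.filter fun t => f (θ t) = d) b) ^ 2) +
      α * n * (D.card + 2) + 2 / n := by
  refine ⟨hcal_all, ?_⟩
  set R := ∑ d ∈ D, ∑ t with f (θ t) = d, (b t - subseqAvg {t | f (θ t) = d} b) ^ 2
  set E := fun d (i : Fin n) => |∑ t with f (θ t) = d ∧ inBucket n i (a t), (b t - a t)|
  have hn0 : (0 : ℝ) < n := by exact_mod_cast hn
  have hα : 0 ≤ α := le_trans (by positivity) (hcal_all ⟨0, hn⟩)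
  have hcells : ∑ d ∈ D, ∑ i : Fin n, 1 / (T : ℝ) * E d i ≤ #D * n * α := by
    calc _ ≤ ∑ d ∈ D, ∑ i : Fin n, α := by
          gcongr with d hd i
          simpa only [E, sum_filter] using hcal_f d hd i
      _ = #D * n * α := by simp only [sum_const, card_univ, Fintype.card_fin, nsmul_eq_mul]; ring
  have hbrier := sum_sq_sub_le_add_sum_abs_level_bucket hn (fun t => f (θ t)) D (fun t => hfD _)
    ha hb fun d => subseqAvg {t | f (θ t) = d} b
  rw [Fintype.card_fin] at hbrier
  have hround : 3 / (2 * n : ℝ) ≤ 2 / n := by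
    rw [div_le_div_iff₀ (by positivity) hn0]; linarith
  calc (1 / (T : ℝ)) * ∑ t, (a t - b t) ^ 2
      ≤ 1 / (T : ℝ) * (R + 3 * T / (2 * n) + ∑ d ∈ D, ∑ i : Fin n, E d i) := by gcongr
    _ = 1 / (T : ℝ) * R + 3 / (2 * n) * (T / T) +
          ∑ d ∈ D, ∑ i : Fin n, 1 / (T : ℝ) * E d i := by
        simp only [mul_add, mul_sum]; ring
    _ ≤ 1 / (T : ℝ) * R + 3 / (2 * n) * 1 + #D * n * α := by
        gcongr
        exact div_self_le_one _
    _ ≤ _ := by linarith [mul_nonneg hα hn0.le]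

/-- **Theorem 3.2, calibeating a single forecaster.**
If the Learner's predictions `a` are `(α, n)`-multicalibrated on the level sets of a
forecaster `f` together with the whole domain `Θ`, then the Learner is `(α, n)`-calibrated
on `Θ` and `(α·n·(|D_f| + 2) + 2/n)`-calibeats `f`:
`B^a ≤ R^f + α·n·(|D_f| + 2) + 2/n`. -/
theorem calibeating_single_forecaster
    (T n : ℕ) (hT : 1 ≤ T) (hn : 1 ≤ n)
    (Θ : Type) (θ : Fin T → Θ)
    (a b : Fin T → ℝ)
    (ha : ∀ t, a t ∈ Set.Icc (0 : ℝ) 1) (hb : ∀ t, b t ∈ Set.Icc (0 : ℝ) 1)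
    -- the forecaster `f`, with finite set of possible forecasts `D_f ⊆ [0,1]`
    (f : Θ → ℝ) (D : Finset ℝ) (hfD : ∀ x, f x ∈ D) (hD : ∀ d ∈ D, d ∈ Set.Icc (0 : ℝ) 1)
    (α : ℝ)
    -- `(α, n)`-multicalibration with respect to the level sets of `f` …
    (hcal_f : ∀ d ∈ D, ∀ i : Fin n,
      (1 / (T : ℝ)) *
        |∑ t, if f (θ t) = d ∧ inBucket n i (a t) then b t - a t else 0| ≤ α)
    -- … and with respect to the whole domain `Θ`
    (hcal_all : ∀ i : Fin n,
      (1 / (T : ℝ)) * |∑ t, if inBucket n i (a t) then b t - a t else 0| ≤ α) :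
    -- the Learner is `(α, n)`-calibrated on `Θ`, and she calibeats `f`:
    (∀ i : Fin n,
      (1 / (T : ℝ)) * |∑ t, if inBucket n i (a t) then b t - a t else 0| ≤ α) ∧
    (1 / (T : ℝ)) * ∑ t, (a t - b t) ^ 2 ≤
      ((1 / (T : ℝ)) * ∑ d ∈ D,
        ∑ t ∈ Finset.univ.filter fun t => f (θ t) = d,
          (b t - subseqAvg (Finset.univ.filter fun t => f (θ t) = d) b) ^ 2) +
      α * n * (D.card + 2) + 2 / n :=
  calibeating_single_forecaster_general T n hn Θ θ a b ha hb f D hfD α hcal_f hcal_all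

end
end
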